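/- For every 3SAT instance I with variables v^1, …, v^k, if I is satisfiable then the digraph D(I) has an out-branching with exactly k leaves. -/

import Mathlib

/-- The six vertices of the gadget digraph `H`. -/
inductive GV : Type
  | x1 | y1 | z1 | x2 | y2 | z2
  deriving DecidableEq

instance instFintypeGV : Fintype GV where
  elems := {GV.x1, GV.y1, GV.z1, GV.x2, GV.y2, GV.z2}
  complete := by intro x; cases x <;> simp

open GV in
/-- The gadget digraph `H` with arcs
x1→y1, y1→z1, z1→x1, x1→x2, y1→y2, z1→z2, x2→z2, z2→y2, y2→x2. -/
def gadgetH : Digraph GV where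
  Adj a b := (a, b) ∈ ([(x1,y1), (y1,z1), (z1,x1), (x1,x2), (y1,y2),
      (z1,z2), (x2,z2), (z2,y2), (y2,x2)] : List (GV × GV))

/-- `l` is a directed path in `D` (a nonrepeating sequence of vertices in which
consecutive vertices are joined by arcs). -/
def Digraph.IsDipath {α : Type} (D : Digraph α) (l : List α) : Prop :=
  l.Chain' D.Adj ∧ l.Nodup

/-- `T` is an out-tree with root `root`: every vertex is reachable from the root,
the root has in-degree zero, every vertex has at most one in-neighbour, and
there are no directed cycles. -/
def Digraph.IsOutTree {α : Type} (T : Digraph α) (root : α) : Prop :=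
  (∀ v, Relation.ReflTransGen T.Adj root v) ∧
  (∀ v, ¬ T.Adj v root) ∧
  (∀ ⦃u u' v⦄, T.Adj u v → T.Adj u' v → u = u') ∧
  (∀ v, ¬ Relation.TransGen T.Adj v v)

/-- `B` is an out-branching of `D` with root `root`: a spanning subgraph of `D`
which is an out-tree. -/
def Digraph.IsOutBranching {α : Type} (D B : Digraph α) (root : α) : Prop :=
  (∀ ⦃u v⦄, B.Adj u v → D.Adj u v) ∧ B.IsOutTree root

/-- The leaves of a digraph: the vertices of out-degree zero. -/
def Digraph.leaves {α : Type} (B : Digraph α) : Set α := {v | ∀ w, ¬ B.Adj v w}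

/-- The vertices of the digraph `D(I)`: the root `r`, a vertex `u i` for each variable
`v^i`, and a copy of the gadget `H` for each clause `C j`. -/
inductive DV (k p : ℕ) : Type
  | r : DV k p
  | u : Fin k → DV k p
  | g : Fin p → GV → DV k p
  deriving DecidableEq, Fintype

/-- The entry vertex of a gadget corresponding to the literal in position `m`
(positions `0`, `1`, `2` correspond to `x`, `y`, `z`). -/
def fstV : Fin 3 → GV := ![GV.x1, GV.y1, GV.z1]

/-- The exit vertex of a gadget corresponding to the literal in position `m`. -/
def sndV : Fin 3 → GV := ![GV.x2, GV.y2, GV.z2]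

/-- A 3SAT instance on variables indexed by `Fin k` is a family of `p` clauses, each an
(ordered) triple of literals; a literal is a variable together with a polarity
(`true` = positive, `false` = negated). -/
abbrev Clauses (k p : ℕ) := Fin p → Fin 3 → Fin k × Bool

/-- The arcs of the digraph `D(I)` associated with the 3SAT instance `C`:
the arcs of each gadget copy `H_j`; the arcs `(r, u_i)`; for each literal `ℓ` of
variable `v^i`, an arc from `u_i` to the entry vertex of `ℓ` in the first clause
containing `ℓ`, and an arc from the exit vertex of `ℓ` in a clause containing `ℓ`
to the entry vertex of `ℓ` in the next clause containing `ℓ`. -/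
inductive DIAdj {k p : ℕ} (C : Clauses k p) : DV k p → DV k p → Prop
  | root (i : Fin k) : DIAdj C .r (.u i)
  | gadget (j : Fin p) {a b : GV} : gadgetH.Adj a b → DIAdj C (.g j a) (.g j b)
  | start (i : Fin k) (b : Bool) (j : Fin p) (m : Fin 3) :
      C j m = (i, b) → (∀ j' : Fin p, j' < j → ∀ m' : Fin 3, C j' m' ≠ (i, b)) →
      DIAdj C (.u i) (.g j (fstV m))
  | chain (ℓ : Fin k × Bool) (j j' : Fin p) (m m' : Fin 3) :
      C j m = ℓ → C j' m' = ℓ → j < j' →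
      (∀ j'' : Fin p, j < j'' → j'' < j' → ∀ m'' : Fin 3, C j'' m'' ≠ ℓ) →
      DIAdj C (.g j (sndV m)) (.g j' (fstV m'))

/-- The digraph `D(I)` associated with the 3SAT instance `C`. -/
def DI {k p : ℕ} (C : Clauses k p) : Digraph (DV k p) := ⟨DIAdj C⟩

/-- The 3SAT instance `C` is satisfiable. -/
def Sat {k p : ℕ} (C : Clauses k p) : Prop :=
  ∃ a : Fin k → Bool, ∀ j : Fin p, ∃ m : Fin 3, a (C j m).1 = (C j m).2


set_option linter.dupNamespace false

namespace DIProof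
open GV

instance : DecidableRel gadgetH.Adj := fun a b =>
  decidable_of_iff ((a, b) ∈ ([(x1,y1), (y1,z1), (z1,x1), (x1,x2), (y1,y2),
      (z1,z2), (x2,z2), (z2,y2), (y2,x2)] : List (GV × GV))) Iff.rfl

/-- internal parent function of the gadget, given selection of entries -/
def ipar : Bool → Bool → Bool → GV → Option GV
  | true, false, false, v => (match v with
      | .x1 => none | .y1 => some .x1 | .z1 => some .y1
      | .z2 => some .z1 | .y2 => some .z2 | .x2 => some .y2)
  | false, true, false, v => (match v with
      | .y1 => none | .z1 => some .y1 | .x1 => some .z1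
      | .x2 => some .x1 | .z2 => some .x2 | .y2 => some .z2)
  | false, false, true, v => (match v with
      | .z1 => none | .x1 => some .z1 | .y1 => some .x1
      | .y2 => some .y1 | .x2 => some .y2 | .z2 => some .x2)
  | true, true, false, v => (match v with
      | .x1 => none | .x2 => some .x1
      | .y1 => none | .z1 => some .y1 | .z2 => some .z1 | .y2 => some .z2)
  | false, true, true, v => (match v with
      | .y1 => none | .y2 => some .y1
      | .z1 => none | .x1 => some .z1 | .x2 => some .x1 | .z2 => some .x2)
  | true, false, true, v => (match v with
      | .z1 => none | .z2 => some .z1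
      | .x1 => none | .y1 => some .x1 | .y2 => some .y1 | .x2 => some .y2)
  | true, true, true, v => (match v with
      | .x1 => none | .y1 => none | .z1 => none
      | .x2 => some .x1 | .y2 => some .y1 | .z2 => some .z1)
  | false, false, false, _ => none

def idepth : Bool → Bool → Bool → GV → ℕ
  | true, false, false, v => (match v with
      | .x1 => 0 | .y1 => 1 | .z1 => 2 | .z2 => 3 | .y2 => 4 | .x2 => 5)
  | false, true, false, v => (match v with
      | .y1 => 0 | .z1 => 1 | .x1 => 2 | .x2 => 3 | .z2 => 4 | .y2 => 5)
  | false, false, true, v => (match v with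
      | .z1 => 0 | .x1 => 1 | .y1 => 2 | .y2 => 3 | .x2 => 4 | .z2 => 5)
  | true, true, false, v => (match v with
      | .x1 => 0 | .x2 => 1 | .y1 => 0 | .z1 => 1 | .z2 => 2 | .y2 => 3)
  | false, true, true, v => (match v with
      | .y1 => 0 | .y2 => 1 | .z1 => 0 | .x1 => 1 | .x2 => 2 | .z2 => 3)
  | true, false, true, v => (match v with
      | .z1 => 0 | .z2 => 1 | .x1 => 0 | .y1 => 1 | .y2 => 2 | .x2 => 3)
  | true, true, true, v => (match v with
      | .x1 => 0 | .y1 => 0 | .z1 => 0 | .x2 => 1 | .y2 => 1 | .z2 => 1)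
  | false, false, false, _ => 0

def entryPos : GV → Option (Fin 3)
  | .x1 => some 0 | .y1 => some 1 | .z1 => some 2 | _ => none

lemma ipar_adj : ∀ (s0 s1 s2 : Bool) (v w : GV),
    ipar s0 s1 s2 v = some w → gadgetH.Adj w v := by decide

lemma ipar_depth : ∀ (s0 s1 s2 : Bool) (v w : GV),
    ipar s0 s1 s2 v = some w → idepth s0 s1 s2 w < idepth s0 s1 s2 v := by decide

lemma idepth_le : ∀ (s0 s1 s2 : Bool) (v : GV), idepth s0 s1 s2 v ≤ 5 := by decide

lemma ipar_none : ∀ (s0 s1 s2 : Bool) (v : GV), (s0 || s1 || s2) = true →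
    ipar s0 s1 s2 v = none →
    ∃ m : Fin 3, v = fstV m ∧ ![s0, s1, s2] m = true := by decide

lemma ipar_entry : ∀ (s0 s1 s2 : Bool) (m : Fin 3), ![s0, s1, s2] m = true →
    ipar s0 s1 s2 (fstV m) = none := by decide

lemma ipar_ne_sel_exit : ∀ (s0 s1 s2 : Bool) (m : Fin 3) (v : GV),
    ![s0, s1, s2] m = true → ipar s0 s1 s2 v ≠ some (sndV m) := by decide

lemma ipar_surj : ∀ (s0 s1 s2 : Bool) (v : GV), (s0 || s1 || s2) = true →
    (∀ w, ipar s0 s1 s2 w ≠ some v) →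
    ∃ m : Fin 3, v = sndV m ∧ ![s0, s1, s2] m = true := by decide

lemma entryPos_fstV : ∀ m : Fin 3, entryPos (fstV m) = some m := by decide
lemma entryPos_eq_some : ∀ (v : GV) (m : Fin 3), entryPos v = some m → v = fstV m := by decide
lemma sndV_injective : ∀ m m' : Fin 3, sndV m = sndV m' → m = m' := by decide
lemma vec3_apply (f : Fin 3 → Bool) (m : Fin 3) : ![f 0, f 1, f 2] m = f m := by
  fin_cases m <;> rfl


open GV

variable {k p : ℕ} (C : Clauses k p) (a : Fin k → Bool)

def posSet (j : Fin p) (ℓ : Fin k × Bool) : Finset (Fin 3) :=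
  Finset.univ.filter fun m => C j m = ℓ

def occSet (ℓ : Fin k × Bool) : Finset (Fin p) :=
  Finset.univ.filter fun j => (posSet C j ℓ).Nonempty

def prevSet (ℓ : Fin k × Bool) (j : Fin p) : Finset (Fin p) :=
  Finset.univ.filter fun j' => j' < j ∧ (posSet C j' ℓ).Nonempty

def nextSet (ℓ : Fin k × Bool) (j : Fin p) : Finset (Fin p) :=
  Finset.univ.filter fun j' => j < j' ∧ (posSet C j' ℓ).Nonempty

def mpos (j : Fin p) (ℓ : Fin k × Bool) (h : (posSet C j ℓ).Nonempty) : Fin 3 :=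
  (posSet C j ℓ).min' h

lemma mem_posSet {j : Fin p} {ℓ} {m : Fin 3} : m ∈ posSet C j ℓ ↔ C j m = ℓ := by
  simp [posSet]

lemma mpos_spec {j : Fin p} {ℓ} (h : (posSet C j ℓ).Nonempty) :
    C j (mpos C j ℓ h) = ℓ := (mem_posSet C).1 (Finset.min'_mem _ h)

lemma mpos_min {j : Fin p} {ℓ} (h : (posSet C j ℓ).Nonempty) {m : Fin 3}
    (hm : C j m = ℓ) : mpos C j ℓ h ≤ m :=
  Finset.min'_le _ m ((mem_posSet C).2 hm)

def selB (j : Fin p) (m : Fin 3) : Bool :=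
  (a (C j m).1 == (C j m).2) && decide (∀ m', C j m' = C j m → m ≤ m')

lemma selB_iff {j : Fin p} {m : Fin 3} : selB C a j m = true ↔
    (a (C j m).1 = (C j m).2 ∧ ∀ m', C j m' = C j m → m ≤ m') := by
  simp [selB]

lemma selB_mpos {j : Fin p} {ℓ} (h : (posSet C j ℓ).Nonempty)
    (ht : a ℓ.1 = ℓ.2) : selB C a j (mpos C j ℓ h) = true := by
  rw [selB_iff]
  have hc := mpos_spec C h
  exact ⟨by rw [hc]; exact ht, fun m' hm' => mpos_min C h (by rw [hc] at hm'; exact hm')⟩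

lemma eq_mpos_of_selB {j : Fin p} {m : Fin 3} (hs : selB C a j m = true)
    (h : (posSet C j (C j m)).Nonempty) : mpos C j (C j m) h = m := by
  have h1 := mpos_min C h (rfl : C j m = C j m)
  have h2 := ((selB_iff C a).1 hs).2 _ (mpos_spec C h)
  omega

/-- there is a selected position in every satisfied clause -/
lemma selB_exists {j : Fin p} (hj : ∃ m, a (C j m).1 = (C j m).2) :
    ∃ m, selB C a j m = true := by
  obtain ⟨m, hm⟩ := hj
  have hne : (posSet C j (C j m)).Nonempty := ⟨m, (mem_posSet C).2 rfl⟩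
  exact ⟨mpos C j (C j m) hne, selB_mpos C a hne hm⟩

lemma posSet_nonempty_of_mem_prevSet {ℓ} {j j' : Fin p}
    (h : j' ∈ prevSet C ℓ j) : (posSet C j' ℓ).Nonempty := by
  simp [prevSet] at h; exact h.2

/-- the parent function of the out-branching -/
def par : DV k p → Option (DV k p)
  | .r => none
  | .u _ => some .r
  | .g j v =>
    match ipar (selB C a j 0) (selB C a j 1) (selB C a j 2) v with
    | some w => some (.g j w)
    | none =>
      match entryPos v with
      | none => none
      | some m =>
        if selB C a j m = true then
          if h : (prevSet C (C j m) j).Nonempty then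
            some (.g ((prevSet C (C j m) j).max' h)
              (sndV (mpos C ((prevSet C (C j m) j).max' h) (C j m)
                (posSet_nonempty_of_mem_prevSet C (Finset.max'_mem _ h)))))
          else some (.u (C j m).1)
        else none

def rank : DV k p → ℕ
  | .r => 0
  | .u _ => 1
  | .g j v => 2 + 6 * j.1 + idepth (selB C a j 0) (selB C a j 1) (selB C a j 2) v

lemma rank_g_lt {j j' : Fin p} (v v' : GV) (h : j' < j) :
    rank C a (.g j' v') < rank C a (.g j v) := by
  have h5 := idepth_le (selB C a j' 0) (selB C a j' 1) (selB C a j' 2) v'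
  have hlt : j'.1 < j.1 := h
  simp only [rank]; omega

lemma rank_lt {v w : DV k p} (h : par C a w = some v) :
    rank C a v < rank C a w := by
  match w with
  | .r => simp [par] at h
  | .u i => simp only [par, Option.some.injEq] at h; subst h; simp only [rank]; omega
  | .g j x =>
    rw [par] at h
    split at h
    · rename_i w' hw'
      cases h
      have := ipar_depth _ _ _ _ _ hw'
      simp only [rank]; omega
    · rename_i hnone
      split at h
      · exact absurd h (by simp)
      · rename_i m hm
        split at h
        · split at h
          · rename_i hs hne
            cases h
            have hmem := Finset.max'_mem _ hne
            simp only [prevSet, Finset.mem_filter] at hmem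
            exact rank_g_lt C a _ _ hmem.2.1
          · cases h; simp only [rank]; omega
        · exact absurd h (by simp)

lemma rank_lt_trans {v w : DV k p} (h : Relation.TransGen (fun u v => par C a v = some u) v w) :
    rank C a v < rank C a w := by
  induction h with
  | single h => exact rank_lt C a h
  | tail _ h ih => exact ih.trans (rank_lt C a h)

variable (ha : ∀ j : Fin p, ∃ m, a (C j m).1 = (C j m).2)

include ha in
lemma selB_or (j : Fin p) :
    (selB C a j 0 || selB C a j 1 || selB C a j 2) = true := by
  obtain ⟨m, hm⟩ := selB_exists C a (ha j)
  rw [← vec3_apply (selB C a j) m] at hm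
  fin_cases m <;> simp_all

include ha in
lemma par_eq_none {v : DV k p} : par C a v = none ↔ v = .r := by
  constructor
  · intro h
    match v with
    | .r => rfl
    | .u i => simp [par] at h
    | .g j x =>
      exfalso
      rw [par] at h
      split at h
      · simp at h
      · rename_i hnone
        obtain ⟨m, hvm, hsm⟩ := ipar_none _ _ _ x (selB_or C a ha j) hnone
        rw [vec3_apply] at hsm
        rw [hvm, entryPos_fstV] at h
        simp only [hsm, if_true] at h
        split at h <;> simp at h
  · rintro rfl; rfl

lemma par_adj {v w : DV k p} (h : par C a w = some v) : DIAdj C v w := by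
  match w with
  | .r => simp [par] at h
  | .u i => simp only [par, Option.some.injEq] at h; subst h; exact .root i
  | .g j x =>
    rw [par] at h
    split at h
    · rename_i w' hw'
      cases h
      exact .gadget j (ipar_adj _ _ _ _ _ hw')
    · rename_i hnone
      split at h
      · simp at h
      · rename_i m hm
        have hx := entryPos_eq_some _ _ hm
        subst hx
        split at h
        · rename_i hs
          split at h
          · rename_i hne
            cases h
            have hmem := Finset.max'_mem _ hne
            simp only [prevSet, Finset.mem_filter] at hmem
            refine DIAdj.chain (C j m) _ j _ m (mpos_spec C _) rfl hmem.2.1 ?_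
            intro j'' h1 h2 m'' hceq
            have hj'' : j'' ∈ prevSet C (C j m) j := by
              simp only [prevSet, Finset.mem_filter]
              exact ⟨Finset.mem_univ _, h2, ⟨m'', (mem_posSet C).2 hceq⟩⟩
            exact absurd (Finset.le_max' _ _ hj'') (not_le.2 h1)
          · rename_i hne
            cases h
            refine DIAdj.start (C j m).1 (C j m).2 j m rfl ?_
            intro j' hj' m' hceq
            exact hne ⟨j', by
              simp only [prevSet, Finset.mem_filter]
              exact ⟨Finset.mem_univ _, hj', ⟨m', (mem_posSet C).2 hceq⟩⟩⟩
        · simp at h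

include ha in
lemma par_reach : ∀ v : DV k p, Relation.ReflTransGen (fun u v => par C a v = some u) .r v := by
  have key : ∀ (n : ℕ) (v : DV k p), rank C a v ≤ n →
      Relation.ReflTransGen (fun u v => par C a v = some u) .r v := by
    intro n
    induction n using Nat.strong_induction_on with
    | _ n ih =>
      intro v hv
      rcases h : par C a v with _ | w
      · rw [par_eq_none C a ha] at h
        subst h; exact .refl
      · have hlt := rank_lt C a h
        exact .tail (ih (rank C a w) (by omega) w le_rfl) h
  exact fun v => key (rank C a v) v le_rfl

/-- the leaf associated with variable i -/
def leafF (i : Fin k) : DV k p :=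
  if h : (occSet C (i, a i)).Nonempty then
    .g ((occSet C (i, a i)).max' h)
       (sndV (mpos C ((occSet C (i, a i)).max' h) (i, a i)
         (by have := Finset.max'_mem _ h; simpa [occSet] using this)))
  else .u i

lemma mem_occSet {j : Fin p} {ℓ} : j ∈ occSet C ℓ ↔ (posSet C j ℓ).Nonempty := by
  simp [occSet]

lemma mpos_congr {j j' : Fin p} {ℓ ℓ'} (hj : j = j') (hl : ℓ = ℓ')
    (h : (posSet C j ℓ).Nonempty) :
    mpos C j ℓ h = mpos C j' ℓ' (by rw [← hj, ← hl]; exact h) := by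
  subst hj; subst hl; rfl

lemma par_ipar {j : Fin p} {v w : GV}
    (h : ipar (selB C a j 0) (selB C a j 1) (selB C a j 2) v = some w) :
    par C a (.g j v) = some (.g j w) := by
  rw [par, h]

lemma par_entry {j : Fin p} {m : Fin 3} (hs : selB C a j m = true) :
    par C a (.g j (fstV m)) =
      (if h : (prevSet C (C j m) j).Nonempty then
        some (.g ((prevSet C (C j m) j).max' h)
          (sndV (mpos C ((prevSet C (C j m) j).max' h) (C j m)
            (posSet_nonempty_of_mem_prevSet C (Finset.max'_mem _ h)))))
      else some (.u (C j m).1)) := by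
  have hip : ipar (selB C a j 0) (selB C a j 1) (selB C a j 2) (fstV m) = none :=
    ipar_entry _ _ _ m (by rw [vec3_apply]; exact hs)
  rw [par, hip, entryPos_fstV]
  exact if_pos hs

lemma leafF_isLeaf (i : Fin k) (w : DV k p) : par C a w ≠ some (leafF C a i) := by
  intro hw
  by_cases hocc : (occSet C (i, a i)).Nonempty
  · rw [leafF, dif_pos hocc] at hw
    set J := (occSet C (i, a i)).max' hocc with hJ
    have hJpos : (posSet C J (i, a i)).Nonempty := by
      exact (mem_occSet C).1 (Finset.max'_mem _ hocc)
    set M := mpos C J (i, a i) hJpos with hM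
    have hCJM : C J M = (i, a i) := mpos_spec C hJpos
    have hsel : selB C a J M = true := selB_mpos C a hJpos rfl
    match w with
    | .r => simp [par] at hw
    | .u _ => simp [par] at hw
    | .g j x =>
      rw [par] at hw
      split at hw
      · rename_i w' hw'
        simp only [Option.some.injEq, DV.g.injEq] at hw
        obtain ⟨rfl, rfl⟩ := hw
        exact ipar_ne_sel_exit _ _ _ M x (by rw [vec3_apply]; exact hsel) hw'
      · split at hw
        · simp at hw
        · rename_i m hm
          split at hw
          · rename_i hs
            split at hw
            · rename_i hne
              simp only [Option.some.injEq, DV.g.injEq] at hw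
              obtain ⟨hj1, hj2⟩ := hw
              have hmem := Finset.max'_mem _ hne
              simp only [prevSet, Finset.mem_filter] at hmem
              -- the previous clause equals J, so J < j
              have hJlt : J < j := by rw [hJ, ← hj1]; exact hmem.2.1
              -- C j m = (i, a i)
              have hM' := sndV_injective _ _ hj2
              have hceq : C j m = (i, a i) := by
                have h1 : C _ (mpos C _ (C j m)
                    (posSet_nonempty_of_mem_prevSet C (Finset.max'_mem _ hne))) = C j m :=
                  mpos_spec C _
                rw [hM'] at h1
                rw [← h1, hj1, ← hJ]
                exact hCJM
              -- then j ∈ occSet, so j ≤ J, contradiction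
              have : j ∈ occSet C (i, a i) :=
                (mem_occSet C).2 ⟨m, (mem_posSet C).2 hceq⟩
              exact absurd (Finset.le_max' _ _ this) (not_le.2 hJlt)
            · simp at hw
          · simp at hw
  · rw [leafF, dif_neg hocc] at hw
    match w with
    | .r => simp [par] at hw
    | .u _ => simp [par] at hw
    | .g j x =>
      rw [par] at hw
      split at hw
      · simp at hw
      · split at hw
        · simp at hw
        · rename_i m hm
          split at hw
          · rename_i hs
            split at hw
            · simp at hw
            · simp only [Option.some.injEq, DV.u.injEq] at hw
              have hsel := (selB_iff C a).1 hs
              have hceq : C j m = (i, a i) := by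
                rw [← hw, hsel.1]
              exact hocc ⟨j, (mem_occSet C).2 ⟨m, (mem_posSet C).2 hceq⟩⟩
          · simp at hw


lemma leafF_g (i : Fin k) (hocc : (occSet C (i, a i)).Nonempty) :
    ∃ M, leafF C a i = .g ((occSet C (i, a i)).max' hocc) (sndV M) ∧
      C ((occSet C (i, a i)).max' hocc) M = (i, a i) ∧
      selB C a ((occSet C (i, a i)).max' hocc) M = true := by
  rw [leafF, dif_pos hocc]
  refine ⟨_, rfl, mpos_spec C _, selB_mpos C a _ rfl⟩

include ha in
lemma not_leaf (hk : 1 ≤ k) (v : DV k p) (hv : v ∉ Set.range (leafF C a)) :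
    ∃ w, par C a w = some v := by
  match v with
  | .r => exact ⟨.u ⟨0, hk⟩, rfl⟩
  | .u i =>
    by_cases hocc : (occSet C (i, a i)).Nonempty
    · -- point to the entry of the first occurrence
      set J0 := (occSet C (i, a i)).min' hocc with hJ0
      have hJ0pos : (posSet C J0 (i, a i)).Nonempty := by
        exact (mem_occSet C).1 (Finset.min'_mem _ hocc)
      set M0 := mpos C J0 (i, a i) hJ0pos with hM0
      have hC0 : C J0 M0 = (i, a i) := mpos_spec C hJ0pos
      have hsel : selB C a J0 M0 = true := selB_mpos C a hJ0pos rfl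
      refine ⟨.g J0 (fstV M0), ?_⟩
      rw [par_entry C a hsel]
      have hprev : ¬ (prevSet C (C J0 M0) J0).Nonempty := by
        rintro ⟨j', hj'⟩
        simp only [prevSet, Finset.mem_filter] at hj'
        rw [hC0] at hj'
        have : j' ∈ occSet C (i, a i) := (mem_occSet C).2 hj'.2.2
        exact absurd (Finset.min'_le _ _ this) (not_le.2 hj'.2.1)
      rw [dif_neg hprev, hC0]
    · exact absurd ⟨i, by rw [leafF, dif_neg hocc]⟩ hv
  | .g j x =>
    by_cases hipar : ∃ w, ipar (selB C a j 0) (selB C a j 1) (selB C a j 2) w = some x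
    · obtain ⟨w, hw⟩ := hipar
      exact ⟨.g j w, par_ipar C a hw⟩
    · push_neg at hipar
      obtain ⟨m, rfl, hsm⟩ := ipar_surj _ _ _ x (selB_or C a ha j) hipar
      rw [vec3_apply] at hsm
      -- x = sndV m with selB, so C j m is the true literal of variable i
      have hsel := (selB_iff C a).1 hsm
      set i := (C j m).1 with hi
      have hceq : C j m = (i, a i) := by rw [hsel.1, hi]
      have hjocc : j ∈ occSet C (i, a i) :=
        (mem_occSet C).2 ⟨m, (mem_posSet C).2 hceq⟩
      have hocc : (occSet C (i, a i)).Nonempty := ⟨j, hjocc⟩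
      by_cases hlast : (occSet C (i, a i)).max' hocc = j
      · -- it IS a leaf, contradiction
        exfalso
        apply hv
        obtain ⟨M, hLF, hCM, hsM⟩ := leafF_g C a i hocc
        rw [hlast] at hLF hCM hsM
        have hMm : M = m := by
          have h1 := ((selB_iff C a).1 hsM).2 m (hceq.trans hCM.symm)
          have h2 := ((selB_iff C a).1 hsm).2 M (hCM.trans hceq.symm)
          omega
        exact ⟨i, by rw [hLF, hMm]⟩
      · -- there is a next occurrence; its entry is a child
        have hjle : j ≤ (occSet C (i, a i)).max' hocc := Finset.le_max' _ _ hjocc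
        have hjlt : j < (occSet C (i, a i)).max' hocc := lt_of_le_of_ne hjle (Ne.symm hlast)
        have hnextne : (nextSet C (i, a i) j).Nonempty := by
          refine ⟨(occSet C (i, a i)).max' hocc, ?_⟩
          simp only [nextSet, Finset.mem_filter]
          have := Finset.max'_mem _ hocc
          simp only [occSet, Finset.mem_filter] at this
          exact ⟨Finset.mem_univ _, hjlt, this.2⟩
        set JN := (nextSet C (i, a i) j).min' hnextne with hJN
        have hJNmem := Finset.min'_mem _ hnextne
        simp only [nextSet, Finset.mem_filter] at hJNmem
        have hJNpos : (posSet C JN (i, a i)).Nonempty := hJNmem.2.2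
        have hjJN : j < JN := hJNmem.2.1
        set MN := mpos C JN (i, a i) hJNpos with hMN
        have hCN : C JN MN = (i, a i) := mpos_spec C hJNpos
        have hselN : selB C a JN MN = true := selB_mpos C a hJNpos rfl
        refine ⟨.g JN (fstV MN), ?_⟩
        rw [par_entry C a hselN]
        have hprevne : (prevSet C (C JN MN) JN).Nonempty := by
          refine ⟨j, ?_⟩
          simp only [prevSet, Finset.mem_filter]
          rw [hCN]
          exact ⟨Finset.mem_univ _, hjJN, ⟨m, (mem_posSet C).2 hceq⟩⟩
        rw [dif_pos hprevne]
        set JP := (prevSet C (C JN MN) JN).max' hprevne with hJP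
        have hJPmem : JP ∈ prevSet C (C JN MN) JN := Finset.max'_mem _ hprevne
        simp only [prevSet, Finset.mem_filter] at hJPmem
        rw [hCN] at hJPmem
        -- the previous occurrence of (i, a i) before JN is j itself
        have hPrevEq : JP = j := by
          refine le_antisymm ?_ (by
            rw [hJP]
            refine Finset.le_max' _ _ ?_
            simp only [prevSet, Finset.mem_filter]
            rw [hCN]
            exact ⟨Finset.mem_univ _, hjJN, ⟨m, (mem_posSet C).2 hceq⟩⟩)
          by_contra hgt
          push_neg at hgt
          have : JP ∈ nextSet C (i, a i) j := by
            simp only [nextSet, Finset.mem_filter]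
            exact ⟨Finset.mem_univ _, hgt, hJPmem.2.2⟩
          exact absurd (Finset.min'_le _ _ this) (not_le.2 hJPmem.2.1)
        have hmp : ∀ hh : (posSet C JP (C JN MN)).Nonempty,
            mpos C JP (C JN MN) hh = m := by
          intro hh
          rw [mpos_congr C hPrevEq (hCN.trans hceq.symm)]
          exact eq_mpos_of_selB C a hsm _
        rw [Option.some.injEq, DV.g.injEq]
        exact ⟨hPrevEq, congrArg sndV (hmp _)⟩

lemma leafF_inj : Function.Injective (leafF C a) := by
  intro i i' h
  by_cases h1 : (occSet C (i, a i)).Nonempty <;>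
    by_cases h2 : (occSet C (i', a i')).Nonempty
  · obtain ⟨M, e1, c1, -⟩ := leafF_g C a i h1
    obtain ⟨M', e2, c2, -⟩ := leafF_g C a i' h2
    rw [e1, e2, DV.g.injEq] at h
    obtain ⟨hJ, hM⟩ := h
    have hMM := sndV_injective _ _ hM
    rw [hJ, hMM] at c1
    exact congrArg Prod.fst (c1.symm.trans c2)
  · obtain ⟨M, e1, -, -⟩ := leafF_g C a i h1
    rw [e1, leafF, dif_neg h2] at h
    simp at h
  · obtain ⟨M, e2, -, -⟩ := leafF_g C a i' h2
    rw [e2, leafF, dif_neg h1] at h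
    simp at h
  · rw [leafF, dif_neg h1, leafF, dif_neg h2] at h
    simpa using h

end DIProof

open DIProof in
/-- If the 3SAT instance `C` (with at least one variable) is satisfiable, then `D(I)`
has an out-branching with exactly `k` leaves. -/
theorem di_satisfiable_outbranching (k p : ℕ) (hk : 1 ≤ k) (C : Clauses k p)
    (hsat : Sat C) :
    ∃ (B : Digraph (DV k p)) (root : DV k p),
      (DI C).IsOutBranching B root ∧ B.leaves.ncard = k := by
  obtain ⟨a, ha⟩ := hsat
  refine ⟨⟨fun u v => par C a v = some u⟩, .r, ⟨?_, ?_, ?_, ?_, ?_⟩, ?_⟩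
  · exact fun u v h => par_adj C a h
  · exact par_reach C a ha
  · intro v h
    exact absurd (show par C a DV.r = some v from h) (by simp [par])
  · intro u u' v h h'
    have h1 : par C a v = some u := h
    have h2 : par C a v = some u' := h'
    rw [h1] at h2
    exact Option.some.inj h2
  · intro v h
    exact absurd (rank_lt_trans C a h) (lt_irrefl _)
  · have hleaves : Digraph.leaves ⟨fun u v => par C a v = some u⟩ =
        Set.range (leafF C a) := by
      ext v
      constructor
      · intro hle
        by_contra hvr
        obtain ⟨w, hw⟩ := not_leaf C a ha hk v hvr
        exact hle w hw
      · rintro ⟨i, rfl⟩ w hw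
        exact leafF_isLeaf C a i w hw
    rw [hleaves, ← Set.image_univ,
      Set.ncard_image_of_injective _ (leafF_inj C a), Set.ncard_univ,
      Nat.card_eq_fintype_card, Fintype.card_fin]
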